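/- If two permutations A, B of {1,...,n} have equal buffer sequences M(A) = M(B), then ACK_i(A) = ACK_i(B) and max(A_1,...,A_i) = max(B_1,...,B_i) for every i; i.e., the buffer sequence determines both the ACK sequence and the running-maximum sequence. -/

import Mathlib

/-- The set of values appearing in the first `i` entries of `A` (indices `1..i`). -/
def prefSet (A : ℕ → ℕ) (i : ℕ) : Finset ℕ := (Finset.Icc 1 i).image A

/-- `H_i`: the maximum value among the first `i` entries (0 for `i = 0`). -/
def hi (A : ℕ → ℕ) (i : ℕ) : ℕ := (prefSet A i).sup id

/-- `ACK_i`: the least positive integer not among the first `i` entries. -/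
noncomputable def ackSeq (A : ℕ → ℕ) (i : ℕ) : ℕ := sInf {k | 0 < k ∧ k ∉ prefSet A i}

/-- The buffer size `M_i = H_i - (ACK_i - 1)`. -/
noncomputable def buf (A : ℕ → ℕ) (i : ℕ) : ℤ := (hi A i : ℤ) - ackSeq A i + 1

/-- `A` restricted to `{1,...,n}` is a permutation of `{1,...,n}`. -/
def IsPermOn (A : ℕ → ℕ) (n : ℕ) : Prop := Set.BijOn A (Set.Icc 1 n) (Set.Icc 1 n)

/-- The positions `1..n` can be partitioned into `k` classes, each of which
induces a strictly increasing subsequence of `A`. -/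
def SUSle (A : ℕ → ℕ) (n k : ℕ) : Prop :=
  ∃ c : ℕ → ℕ, (∀ i ∈ Finset.Icc 1 n, c i < k) ∧
    ∀ i j, i ∈ Finset.Icc 1 n → j ∈ Finset.Icc 1 n → i < j → c i = c j → A i < A j

/-- `SUS(A)`: minimum number of increasing subsequences partitioning `A₁,…,Aₙ`. -/
noncomputable def sus (A : ℕ → ℕ) (n : ℕ) : ℕ := sInf {k | SUSle A n k}

/-- `LDS(A)`: maximum length of a strictly decreasing subsequence of `A₁,…,Aₙ`. -/
noncomputable def lds (A : ℕ → ℕ) (n : ℕ) : ℕ :=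
  sSup {m | ∃ s : Fin m → ℕ, StrictMono s ∧ (∀ t, s t ∈ Finset.Icc 1 n) ∧
    ∀ t u : Fin m, t < u → A (s u) < A (s t)}

/-!
Write `H_i = hi A i` and `ACK_i = ackSeq A i`, so that `M_i = H_i - ACK_i + 1 ≥ 0`, and induct on `i`.
If `M_{i+1} = 0` the first `i + 1` values are exactly `{1, …, i + 1}`. Otherwise `M` drops at step
`i + 1` exactly when the new value is `ACK_i`, and then the running maximum is unchanged; when `M`
does not drop, `ACK` is unchanged. In both cases one of `H_{i+1}`, `ACK_{i+1}` is the same for `A`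
and `B`, and `M_{i+1}` then determines the other.
-/

section Prefix

variable {A : ℕ → ℕ} {i k : ℕ}

lemma prefSet_succ (A : ℕ → ℕ) (i : ℕ) :
    prefSet A (i + 1) = insert (A (i + 1)) (prefSet A i) := by
  have hIcc : Finset.Icc 1 (i + 1) = insert (i + 1) (Finset.Icc 1 i) := by
    ext j
    simp only [Finset.mem_insert, Finset.mem_Icc]
    omega
  rw [prefSet, hIcc, Finset.image_insert, prefSet]

lemma hi_succ (A : ℕ → ℕ) (i : ℕ) : hi A (i + 1) = max (A (i + 1)) (hi A i) := by
  rw [hi, prefSet_succ, Finset.sup_insert]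
  rfl

lemma le_hi (hk : k ∈ prefSet A i) : k ≤ hi A i :=
  Finset.le_sup (f := id) hk

lemma ackSeq_pos_and_notMem (A : ℕ → ℕ) (i : ℕ) :
    0 < ackSeq A i ∧ ackSeq A i ∉ prefSet A i :=
  Nat.sInf_mem (s := {k | 0 < k ∧ k ∉ prefSet A i})
    ⟨hi A i + 1, by omega, fun h => by have := le_hi h; omega⟩

lemma mem_prefSet_of_lt_ackSeq (hk : 0 < k) (hlt : k < ackSeq A i) : k ∈ prefSet A i := by
  by_contra h
  have : ackSeq A i ≤ k := Nat.sInf_le ⟨hk, h⟩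
  omega

lemma ackSeq_le_hi_add_one (A : ℕ → ℕ) (i : ℕ) : ackSeq A i ≤ hi A i + 1 :=
  Nat.sInf_le ⟨by omega, fun h => by have := le_hi h; omega⟩

lemma ackSeq_le_succ (A : ℕ → ℕ) (i : ℕ) : ackSeq A i ≤ ackSeq A (i + 1) := by
  obtain ⟨hpos, hnotMem⟩ := ackSeq_pos_and_notMem A (i + 1)
  exact Nat.sInf_le ⟨hpos, fun h => hnotMem (prefSet_succ A i ▸ Finset.mem_insert_of_mem h)⟩

lemma ackSeq_succ_of_ne (ha : A (i + 1) ≠ ackSeq A i) : ackSeq A (i + 1) = ackSeq A i := by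
  obtain ⟨hpos, hnotMem⟩ := ackSeq_pos_and_notMem A i
  refine le_antisymm (Nat.sInf_le ⟨hpos, ?_⟩) (ackSeq_le_succ A i)
  rw [prefSet_succ, Finset.mem_insert, not_or]
  exact ⟨Ne.symm ha, hnotMem⟩

lemma ackSeq_lt_succ_of_eq (ha : A (i + 1) = ackSeq A i) : ackSeq A i < ackSeq A (i + 1) := by
  have hmem : ackSeq A i ∈ prefSet A (i + 1) := ha ▸ prefSet_succ A i ▸ Finset.mem_insert_self _ _
  exact (ackSeq_le_succ A i).lt_of_ne fun h => (ackSeq_pos_and_notMem A (i + 1)).2 (h ▸ hmem)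

lemma buf_le_succ_of_ne (ha : A (i + 1) ≠ ackSeq A i) : buf A i ≤ buf A (i + 1) := by
  have hmax := hi_succ A i
  simp only [buf, ackSeq_succ_of_ne ha]
  omega

lemma hi_succ_eq_of_buf_succ_lt (h : buf A (i + 1) < buf A i) : hi A (i + 1) = hi A i := by
  have ha : A (i + 1) = ackSeq A i := by
    by_contra ha
    exact (buf_le_succ_of_ne ha).not_gt h
  have hmax := hi_succ A i
  have hle := ackSeq_le_hi_add_one A i
  have hle' := ackSeq_le_hi_add_one A (i + 1)
  -- `ACK_i = H_i + 1` would give `M_i = 0 ≤ M_{i+1}`, so the new value `ACK_i` is at most `H_i`.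
  simp only [buf] at h
  omega

lemma ackSeq_succ_eq_of_buf_le (h : buf A i ≤ buf A (i + 1)) (h0 : buf A (i + 1) ≠ 0) :
    ackSeq A (i + 1) = ackSeq A i := by
  by_contra hne
  have ha : A (i + 1) = ackSeq A i := by
    by_contra ha
    exact hne (ackSeq_succ_of_ne ha)
  have hlt := ackSeq_lt_succ_of_eq ha
  have hmax := hi_succ A i
  have hle := ackSeq_le_hi_add_one A (i + 1)
  -- `ACK` grows and `H_{i+1} = max ACK_i H_i`: `M` drops if `ACK_i ≤ H_i`, and `M_{i+1} ≤ 0` otherwise.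
  simp only [buf] at h h0
  omega

lemma card_prefSet (hinj : Set.InjOn A (Set.Icc 1 i)) : (prefSet A i).card = i := by
  rw [prefSet, Finset.card_image_of_injOn (by rwa [Finset.coe_Icc]), Nat.card_Icc]
  omega

lemma prefSet_eq_Icc_of_buf_eq_zero (h0 : 0 ∉ prefSet A i) (h : buf A i = 0) :
    prefSet A i = Finset.Icc 1 (hi A i) := by
  ext k
  rw [Finset.mem_Icc]
  refine ⟨fun hk => ⟨Nat.pos_of_ne_zero (by rintro rfl; exact h0 hk), le_hi hk⟩, fun hk => ?_⟩
  exact mem_prefSet_of_lt_ackSeq hk.1 (by simp only [buf] at h; omega)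

lemma hi_eq_of_buf_eq_zero (hinj : Set.InjOn A (Set.Icc 1 i)) (h0 : 0 ∉ prefSet A i)
    (h : buf A i = 0) : hi A i = i := by
  have hcard := card_prefSet hinj
  rwa [prefSet_eq_Icc_of_buf_eq_zero h0 h, Nat.card_Icc, Nat.add_sub_cancel] at hcard

end Prefix

section Permutation

variable {A B : ℕ → ℕ} {n i : ℕ}

lemma IsPermOn.injOn_Icc (hA : IsPermOn A n) (hin : i ≤ n) : Set.InjOn A (Set.Icc 1 i) :=
  hA.injOn.mono (Set.Icc_subset_Icc_right hin)

lemma IsPermOn.zero_notMem_prefSet (hA : IsPermOn A n) (hin : i ≤ n) : 0 ∉ prefSet A i := by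
  simp only [prefSet, Finset.mem_image, Finset.mem_Icc, not_exists, not_and]
  intro j hj hAj
  have := hA.mapsTo (show j ∈ Set.Icc 1 n from ⟨hj.1, hj.2.trans hin⟩)
  simp only [Set.mem_Icc, hAj] at this
  omega

lemma IsPermOn.hi_eq_of_buf_eq_zero (hA : IsPermOn A n) (hin : i ≤ n) (h : buf A i = 0) :
    hi A i = i :=
  _root_.hi_eq_of_buf_eq_zero (hA.injOn_Icc hin) (hA.zero_notMem_prefSet hin) h

lemma ackSeq_succ_eq_and_hi_succ_eq (hA : IsPermOn A n) (hB : IsPermOn B n) (hin : i + 1 ≤ n)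
    (hack : ackSeq A i = ackSeq B i) (hhi : hi A i = hi B i)
    (hbuf : buf A (i + 1) = buf B (i + 1)) :
    ackSeq A (i + 1) = ackSeq B (i + 1) ∧ hi A (i + 1) = hi B (i + 1) := by
  have hbuf_i : buf A i = buf B i := by simp only [buf, hack, hhi]
  have key : ackSeq A (i + 1) = ackSeq B (i + 1) ∨ hi A (i + 1) = hi B (i + 1) := by
    by_cases h0 : buf A (i + 1) = 0
    · right
      rw [hA.hi_eq_of_buf_eq_zero hin h0, hB.hi_eq_of_buf_eq_zero hin (hbuf ▸ h0)]
    by_cases hlt : buf A (i + 1) < buf A i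
    · right
      rw [hi_succ_eq_of_buf_succ_lt hlt, hi_succ_eq_of_buf_succ_lt (hbuf ▸ hbuf_i ▸ hlt), hhi]
    · left
      rw [not_lt] at hlt
      rw [ackSeq_succ_eq_of_buf_le hlt h0,
        ackSeq_succ_eq_of_buf_le (hbuf ▸ hbuf_i ▸ hlt) (hbuf ▸ h0), hack]
  simp only [buf] at hbuf
  omega

end Permutation

/-- equal buffer sequences force equal ACK sequences and equal
running-maximum sequences. -/
theorem buf_determines_ack_and_max (n : ℕ) (A B : ℕ → ℕ)
    (hA : IsPermOn A n) (hB : IsPermOn B n)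
    (hbuf : ∀ i ∈ Finset.Icc 1 n, buf A i = buf B i) :
    ∀ i ∈ Finset.Icc 1 n, ackSeq A i = ackSeq B i ∧ hi A i = hi B i := by
  suffices h : ∀ i ≤ n, ackSeq A i = ackSeq B i ∧ hi A i = hi B i from
    fun i hmem => h i (Finset.mem_Icc.mp hmem).2
  intro i
  induction i with
  | zero => simp [ackSeq, hi, prefSet]
  | succ i ih =>
    intro hin
    obtain ⟨hack, hhi⟩ := ih (by omega)
    exact ackSeq_succ_eq_and_hi_succ_eq hA hB hin hack hhi
      (hbuf (i + 1) (Finset.mem_Icc.mpr ⟨by omega, hin⟩))
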